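/- arXiv:2012.11042 — 7 statements merged into one kernel-verified Lean document; each statement's English description precedes it below -/
import Mathlib

section
/- Let α ∈ (0,1) and ω > 0. Then the improper integral of t^{-α} e^{-iωt} over (0,∞) converges in the sense that lim_{R→∞} ∫_0^R t^{-α} e^{-iωt} dt = Γ(1-α) · ω^{α-1} · exp(i π (α-1)/2), i.e. it equals Γ(1-α)·(iω)^{α-1} where (iω)^{α-1} is taken with the principal-type branch (iω)^β = |ω|^β exp(iπβ/2) for ω > 0. -/
/-!
For `Re b > 0` the Laplace transform `∫₀^∞ t^{-α} e^{-bt} dt` equals `Γ(1-α) b^{α-1}`: both sides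
are holomorphic on the right half-plane and agree on the positive reals (Euler's integral).
Integrating by parts against `e^{-bt}/(-b)` bounds every tail `∫_R^S t^{-α} e^{-bt} dt` by
`2 R^{-α} / |b|`, uniformly in `Re b ≥ 0`. Hence `‖∫₀^R t^{-α} e^{-bt} dt - Γ(1-α) b^{α-1}‖ ≤
2 R^{-α} / |b|` for `Re b > 0`, and, both sides being continuous in `b` for fixed `R`, also at
`b = iω`, where `(iω)^{α-1} = ω^{α-1} e^{iπ(α-1)/2}`.
-/

open MeasureTheory Real Filter Set Topology

lemma Filter.Eventually.frequently_ofReal_nhdsNE {p : ℂ → Prop} {x₀ : ℝ}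
    (h : ∀ᶠ x : ℝ in 𝓝[≠] x₀, p x) : ∃ᶠ z in 𝓝[≠] (x₀ : ℂ), p z :=
  (Complex.continuous_ofReal.continuousWithinAt.tendsto_nhdsWithin
    fun _ hx => Complex.ofReal_injective.ne hx).frequently h.frequently

lemma Complex.I_mul_ofReal_cpow {ω : ℝ} (hω : 0 < ω) (s : ℂ) :
    (I * ω) ^ s = (ω : ℂ) ^ s * exp (I * π * s / 2) := by
  rw [cpow_def_of_ne_zero (by simp [hω.ne']), cpow_def_of_ne_zero (by simp [hω.ne']),
    log_mul_ofReal ω hω I I_ne_zero, ofReal_log hω.le, log_I, ← exp_add]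
  ring_nf

lemma integral_mul_rpow_neg_sub_one (α : ℝ) {R S : ℝ} (hR : 0 < R) (hRS : R ≤ S) :
    ∫ t in R..S, α * t ^ (-α - 1) = R ^ (-α) - S ^ (-α) := by
  have hpos : ∀ t ∈ uIcc R S, 0 < t := fun t ht => hR.trans_le (uIcc_of_le hRS ▸ ht).1
  rw [intervalIntegral.integral_eq_sub_of_hasDerivAt (f := fun t => -t ^ (-α))
    (fun t ht => (hasDerivAt_rpow_const (Or.inl (hpos t ht).ne')).neg.congr_deriv (by ring))
    (ContinuousOn.intervalIntegrable fun t ht =>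
      ((continuousAt_rpow_const t _ (Or.inl (hpos t ht).ne')).const_mul α).continuousWithinAt)]
  ring

lemma norm_cexp_neg_mul_div_le {b : ℂ} (hb : 0 ≤ b.re) {t : ℝ} (ht : 0 ≤ t) :
    ‖Complex.exp (-(b * t)) / -b‖ ≤ ‖b‖⁻¹ := by
  rw [norm_div, norm_neg, Complex.norm_exp, div_eq_mul_inv]
  refine mul_le_of_le_one_left (by positivity) (exp_le_one_iff.mpr ?_)
  simpa using mul_nonneg hb ht

noncomputable def fracKernel (α : ℝ) (b : ℂ) (t : ℝ) : ℂ :=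
  ((t ^ (-α) : ℝ) : ℂ) * Complex.exp (-(b * t))

section fracKernel

variable {α : ℝ} {b : ℂ}

lemma norm_fracKernel {t : ℝ} (ht : 0 < t) :
    ‖fracKernel α b t‖ = t ^ (-α) * rexp (-(b.re * t)) := by
  rw [fracKernel, norm_mul, Complex.norm_exp, Complex.norm_of_nonneg (rpow_nonneg ht.le _)]
  simp

lemma norm_fracKernel_le {t : ℝ} (ht : 0 < t) (hb : 0 ≤ b.re) :
    ‖fracKernel α b t‖ ≤ t ^ (-α) := by
  rw [norm_fracKernel ht]
  exact mul_le_of_le_one_right (rpow_nonneg ht.le _)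
    (exp_le_one_iff.mpr (by nlinarith))

lemma continuousOn_fracKernel : ContinuousOn (fracKernel α b) (Ioi 0) := fun t ht =>
  (ContinuousAt.mul (continuousAt_rpow_const t _ (Or.inl ht.ne')).ofReal
    (by fun_prop)).continuousWithinAt

lemma aestronglyMeasurable_fracKernel {s : Set ℝ} (hs : s ⊆ Ioi 0) (hm : MeasurableSet s) :
    AEStronglyMeasurable (fracKernel α b) (volume.restrict s) :=
  (continuousOn_fracKernel.mono hs).aestronglyMeasurable hm

lemma integrableOn_fracKernel (hα : α < 1) (hb : 0 < b.re) :
    IntegrableOn (fracKernel α b) (Ioi 0) := by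
  have hdom : IntegrableOn (fun t : ℝ => t ^ (-α) * rexp (-b.re * t)) (Ioi 0) := by
    simpa using integrableOn_rpow_mul_exp_neg_mul_rpow (p := 1) (by linarith) zero_lt_one hb
  refine hdom.mono' (aestronglyMeasurable_fracKernel subset_rfl measurableSet_Ioi) ?_
  filter_upwards [ae_restrict_mem measurableSet_Ioi] with t ht
  rw [norm_fracKernel ht, neg_mul]

lemma hasDerivAt_fracKernel_param (z : ℂ) (t : ℝ) :
    HasDerivAt (fun b => fracKernel α b t) (-t * fracKernel α z t) z := by
  have hlin : HasDerivAt (fun b : ℂ => -(b * t)) (-t) z := (hasDerivAt_mul_const (t : ℂ)).neg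
  exact (hlin.cexp.const_mul _).congr_deriv (by simp only [fracKernel]; ring)

lemma hasDerivAt_integral_fracKernel (hα : α < 1) (hb : 0 < b.re) :
    HasDerivAt (fun b => ∫ t in Ioi 0, fracKernel α b t)
      (∫ t in Ioi 0, -t * fracKernel α b t) b := by
  obtain ⟨ε, hε, hεb⟩ : ∃ ε, 0 < ε ∧ ε < b.re := ⟨b.re / 2, by positivity, by linarith⟩
  have hs : {z : ℂ | ε < z.re} ∈ 𝓝 b :=
    (isOpen_lt continuous_const Complex.continuous_re).mem_nhds hεb
  have hbound : ∀ᵐ t ∂(volume.restrict (Ioi 0)), ∀ z ∈ {z : ℂ | ε < z.re},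
      ‖-t * fracKernel α z t‖ ≤ t ^ (1 - α) * rexp (-ε * t) := by
    filter_upwards [ae_restrict_mem measurableSet_Ioi] with t (ht : 0 < t) z (hz : ε < z.re)
    rw [norm_mul, norm_fracKernel ht, norm_neg, Complex.norm_of_nonneg ht.le,
      sub_eq_add_neg, rpow_add ht, rpow_one, mul_assoc]
    gcongr
    nlinarith
  have hbound_int : IntegrableOn (fun t : ℝ => t ^ (1 - α) * rexp (-ε * t)) (Ioi 0) := by
    simpa using integrableOn_rpow_mul_exp_neg_mul_rpow (p := 1) (by linarith) zero_lt_one hε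
  exact (hasDerivAt_integral_of_dominated_loc_of_deriv_le (F := fun z t => fracKernel α z t) hs
    (.of_forall fun z => aestronglyMeasurable_fracKernel subset_rfl measurableSet_Ioi)
    (integrableOn_fracKernel hα hb)
    (Complex.continuous_ofReal.aestronglyMeasurable.neg.mul
      (aestronglyMeasurable_fracKernel subset_rfl measurableSet_Ioi))
    hbound hbound_int (.of_forall fun t z _ => hasDerivAt_fracKernel_param z t)).2

lemma integral_fracKernel_ofReal (hα : α < 1) {x : ℝ} (hx : 0 < x) :
    ∫ t in Ioi 0, fracKernel α x t = Complex.Gamma (1 - α) * (x : ℂ) ^ ((α : ℂ) - 1) := by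
  have hGamma := Complex.integral_cpow_mul_exp_neg_mul_Ioi (a := 1 - α) (by simpa using hα) hx
  have hkernel : ∀ t ∈ Ioi (0 : ℝ),
      (t : ℂ) ^ (1 - (α : ℂ) - 1) * Complex.exp (-(x * t)) = fracKernel α x t := fun t ht => by
    rw [fracKernel, Complex.ofReal_cpow (le_of_lt ht)]; push_cast; ring_nf
  rw [setIntegral_congr_fun measurableSet_Ioi hkernel] at hGamma
  have harg : (x : ℂ).arg ≠ π := by simp [Complex.arg_ofReal_of_nonneg hx.le, pi_ne_zero.symm]
  rw [hGamma, mul_comm, one_div, Complex.inv_cpow _ _ harg, ← Complex.cpow_neg]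
  ring_nf

lemma integral_fracKernel (hα : α < 1) (hb : 0 < b.re) :
    ∫ t in Ioi 0, fracKernel α b t = Complex.Gamma (1 - α) * b ^ ((α : ℂ) - 1) := by
  have hU : IsOpen {z : ℂ | 0 < z.re} := isOpen_lt continuous_const Complex.continuous_re
  have hlhs : AnalyticOnNhd ℂ (fun z => ∫ t in Ioi 0, fracKernel α z t) {z | 0 < z.re} :=
    DifferentiableOn.analyticOnNhd (fun z hz =>
      (hasDerivAt_integral_fracKernel hα hz).differentiableAt.differentiableWithinAt) hU
  have hrhs : AnalyticOnNhd ℂ (fun z => Complex.Gamma (1 - α) * z ^ ((α : ℂ) - 1))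
      {z | 0 < z.re} :=
    DifferentiableOn.analyticOnNhd (fun z hz =>
      ((differentiableAt_id.cpow_const (Or.inl hz)).const_mul _).differentiableWithinAt) hU
  have hreal : ∀ᶠ x : ℝ in 𝓝[≠] 1, ∫ t in Ioi 0, fracKernel α x t
      = Complex.Gamma (1 - α) * (x : ℂ) ^ ((α : ℂ) - 1) := by
    filter_upwards [nhdsWithin_le_nhds (lt_mem_nhds one_pos)] with x hx
    exact integral_fracKernel_ofReal hα hx
  have hfreq := hreal.frequently_ofReal_nhdsNE
    (p := fun z => ∫ t in Ioi 0, fracKernel α z t = Complex.Gamma (1 - α) * z ^ ((α : ℂ) - 1))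
  rw [Complex.ofReal_one] at hfreq
  exact hlhs.eqOn_of_preconnected_of_frequently_eq hrhs
    (convex_halfSpace_re_gt 0).isPreconnected (by simp) hfreq hb

lemma intervalIntegral_fracKernel_eq_by_parts (hb0 : b ≠ 0) {R S : ℝ} (hR : 0 < R)
    (hRS : R ≤ S) :
    ∫ t in R..S, fracKernel α b t
      = ((S ^ (-α) : ℝ) : ℂ) * (Complex.exp (-(b * S)) / -b)
        - ((R ^ (-α) : ℝ) : ℂ) * (Complex.exp (-(b * R)) / -b)
        - ∫ t in R..S, ((-α * t ^ (-α - 1) : ℝ) : ℂ) * (Complex.exp (-(b * t)) / -b) := by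
  have hpos : ∀ t ∈ uIcc R S, 0 < t := fun t ht => hR.trans_le (uIcc_of_le hRS ▸ ht).1
  have hu : ∀ t ∈ uIcc R S, HasDerivAt (fun t : ℝ => ((t ^ (-α) : ℝ) : ℂ))
      ((-α * t ^ (-α - 1) : ℝ) : ℂ) t := fun t ht =>
    (hasDerivAt_rpow_const (Or.inl (hpos t ht).ne')).ofReal_comp
  have hv : ∀ t ∈ uIcc R S, HasDerivAt (fun t : ℝ => Complex.exp (-(b * t)) / -b)
      (Complex.exp (-(b * t))) t := fun t _ => by
    have hlin : HasDerivAt (fun t : ℝ => -(b * t)) (-b) t :=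
      ((Complex.ofRealCLM.hasDerivAt (x := t)).const_mul b).neg.congr_deriv (by simp)
    exact (hlin.cexp.div_const _).congr_deriv (mul_div_cancel_right₀ _ (neg_ne_zero.mpr hb0))
  exact intervalIntegral.integral_mul_deriv_eq_deriv_mul hu hv
    (ContinuousOn.intervalIntegrable fun t ht =>
      ContinuousAt.continuousWithinAt
        ((continuousAt_rpow_const t _ (Or.inl (hpos t ht).ne')).const_mul _).ofReal)
    (Continuous.intervalIntegrable (by fun_prop) _ _)

lemma norm_intervalIntegral_fracKernel_le (hα : 0 < α) (hb : 0 ≤ b.re)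
    (hb0 : b ≠ 0) {R S : ℝ} (hR : 0 < R) (hRS : R ≤ S) :
    ‖∫ t in R..S, fracKernel α b t‖ ≤ 2 * R ^ (-α) / ‖b‖ := by
  have hboundary : ∀ T, 0 < T →
      ‖((T ^ (-α) : ℝ) : ℂ) * (Complex.exp (-(b * T)) / -b)‖ ≤ T ^ (-α) * ‖b‖⁻¹ := fun T hT => by
    rw [norm_mul, Complex.norm_of_nonneg (rpow_nonneg hT.le _)]
    exact mul_le_mul_of_nonneg_left (norm_cexp_neg_mul_div_le hb hT.le) (rpow_nonneg hT.le _)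
  have hmiddle : ‖∫ t in R..S, ((-α * t ^ (-α - 1) : ℝ) : ℂ) * (Complex.exp (-(b * t)) / -b)‖
      ≤ (R ^ (-α) - S ^ (-α)) * ‖b‖⁻¹ := by
    rw [← integral_mul_rpow_neg_sub_one α hR hRS, ← intervalIntegral.integral_mul_const]
    refine intervalIntegral.norm_integral_le_of_norm_le hRS (.of_forall fun t ht => ?_)
      (ContinuousOn.intervalIntegrable fun t ht => (((continuousAt_rpow_const t _
        (Or.inl (hR.trans_le (uIcc_of_le hRS ▸ ht).1).ne')).const_mul α).mul_const _
        ).continuousWithinAt)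
    have ht : 0 < t := hR.trans ht.1
    rw [norm_mul, Complex.norm_real, norm_mul, norm_neg, Real.norm_of_nonneg hα.le,
      Real.norm_of_nonneg (rpow_nonneg ht.le _)]
    exact mul_le_mul_of_nonneg_left (norm_cexp_neg_mul_div_le hb ht.le) (by positivity)
  calc ‖∫ t in R..S, fracKernel α b t‖
      ≤ S ^ (-α) * ‖b‖⁻¹ + R ^ (-α) * ‖b‖⁻¹ + (R ^ (-α) - S ^ (-α)) * ‖b‖⁻¹ := by
        rw [intervalIntegral_fracKernel_eq_by_parts hb0 hR hRS]
        exact (norm_sub_le _ _).trans (add_le_add ((norm_sub_le _ _).trans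
          (add_le_add (hboundary S (hR.trans_le hRS)) (hboundary R hR))) hmiddle)
    _ = 2 * R ^ (-α) / ‖b‖ := by ring

lemma norm_setIntegral_Ioi_fracKernel_le (hα : α ∈ Ioo 0 1) (hb : 0 < b.re) {R : ℝ}
    (hR : 0 < R) : ‖∫ t in Ioi R, fracKernel α b t‖ ≤ 2 * R ^ (-α) / ‖b‖ :=
  le_of_tendsto (intervalIntegral_tendsto_integral_Ioi R
      ((integrableOn_fracKernel hα.2 hb).mono_set (Ioi_subset_Ioi hR.le)) tendsto_id).norm
    (by filter_upwards [eventually_ge_atTop R] with S hS using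
      norm_intervalIntegral_fracKernel_le hα.1 hb.le (Complex.ne_zero_of_re_pos hb) hR hS)

lemma norm_integral_Ioc_fracKernel_sub_le_of_re_pos (hα : α ∈ Ioo 0 1) (hb : 0 < b.re)
    {R : ℝ} (hR : 0 < R) :
    ‖(∫ t in Ioc 0 R, fracKernel α b t) - Complex.Gamma (1 - α) * b ^ ((α : ℂ) - 1)‖
      ≤ 2 * R ^ (-α) / ‖b‖ := by
  have hint := integrableOn_fracKernel hα.2 hb
  rw [← integral_fracKernel hα.2 hb, ← Ioc_union_Ioi_eq_Ioi hR.le,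
    setIntegral_union (Ioc_disjoint_Ioi le_rfl) measurableSet_Ioi
      (hint.mono_set Ioc_subset_Ioi_self) (hint.mono_set (Ioi_subset_Ioi hR.le)),
    sub_add_cancel_left, norm_neg]
  exact norm_setIntegral_Ioi_fracKernel_le hα hb hR

lemma continuousOn_integral_Ioc_fracKernel (hα : α < 1) (R : ℝ) :
    ContinuousOn (fun b => ∫ t in Ioc 0 R, fracKernel α b t) {b | 0 ≤ b.re} :=
  continuousOn_of_dominated (bound := fun t => t ^ (-α))
    (fun _ _ => aestronglyMeasurable_fracKernel Ioc_subset_Ioi_self measurableSet_Ioc)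
    (fun _ hb => by
      filter_upwards [ae_restrict_mem measurableSet_Ioc] with t ht using norm_fracKernel_le ht.1 hb)
    ((intervalIntegral.intervalIntegrable_rpow' (by linarith)).def'.mono_set Ioc_subset_uIoc)
    (.of_forall fun t => Continuous.continuousOn (by unfold fracKernel; fun_prop))

lemma norm_integral_Ioc_fracKernel_sub_le (hα : α ∈ Ioo 0 1) (hb : 0 ≤ b.re) (hb0 : b ≠ 0)
    {R : ℝ} (hR : 0 < R) :
    ‖(∫ t in Ioc 0 R, fracKernel α b t) - Complex.Gamma (1 - α) * b ^ ((α : ℂ) - 1)‖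
      ≤ 2 * R ^ (-α) / ‖b‖ := by
  have hslit : b ∈ Complex.slitPlane := Complex.mem_slitPlane_iff.mpr
    (hb.lt_or_eq.imp id fun h him => hb0 (Complex.ext h.symm him))
  have hsub : {z : ℂ | 0 < z.re} ⊆ {z | 0 ≤ z.re} := fun z (hz : 0 < z.re) => hz.le
  have hcl : b ∈ closure {z : ℂ | 0 < z.re} := by rwa [Complex.closure_setOfPred_lt_re]
  refine ContinuousWithinAt.closure_le hcl ?_ ?_
    fun z hz => norm_integral_Ioc_fracKernel_sub_le_of_re_pos hα hz hR
  · exact (((continuousOn_integral_Ioc_fracKernel hα.2 R) b hb).mono hsub |>.sub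
      ((continuousAt_cpow_const hslit).const_mul _).continuousWithinAt).norm
  · exact (continuousAt_const.div continuous_norm.continuousAt
      (norm_ne_zero_iff.mpr hb0)).continuousWithinAt

theorem tendsto_integral_Ioc_fracKernel (hα : α ∈ Ioo 0 1) (hb : 0 ≤ b.re) (hb0 : b ≠ 0) :
    Tendsto (fun R => ∫ t in Ioc 0 R, fracKernel α b t) atTop
      (𝓝 (Complex.Gamma (1 - α) * b ^ ((α : ℂ) - 1))) := by
  rw [tendsto_iff_norm_sub_tendsto_zero]
  refine squeeze_zero' (g := fun R => 2 * R ^ (-α) / ‖b‖)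
    (.of_forall fun _ => norm_nonneg _) ?_ ?_
  · filter_upwards [eventually_gt_atTop 0] with R hR using
      norm_integral_Ioc_fracKernel_sub_le hα hb hb0 hR
  · simpa using ((tendsto_rpow_neg_atTop hα.1).const_mul 2).div_const ‖b‖

end fracKernel

/-- For `α ∈ (0,1)` and `ω > 0`, the improper integral `∫_0^R t^{-α} e^{-iωt} dt`
converges as `R → ∞` to `Γ(1-α) · ω^{α-1} · exp(iπ(α-1)/2)`. -/
theorem fourier_transform_frac_kernel (α ω : ℝ) (hα : α ∈ Set.Ioo (0:ℝ) 1) (hω : 0 < ω) :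
    Tendsto
      (fun R : ℝ => ∫ t in Set.Ioc (0:ℝ) R,
        ((t ^ (-α) : ℝ) : ℂ) * Complex.exp (-(Complex.I * (ω : ℂ) * (t : ℂ))))
      atTop
      (nhds (Complex.Gamma (1 - (α : ℂ)) * ((ω ^ (α - 1) : ℝ) : ℂ) *
        Complex.exp (Complex.I * (Real.pi : ℂ) * ((α : ℂ) - 1) / 2))) := by
  have hlim := tendsto_integral_Ioc_fracKernel (b := Complex.I * ω) hα (by simp) (by simp [hω.ne'])
  rw [Complex.I_mul_ofReal_cpow hω, ← mul_assoc] at hlim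
  rwa [Complex.ofReal_cpow hω.le, Complex.ofReal_sub, Complex.ofReal_one]
end

section
/- For every real c > 0, ∫_0^1 ∫_0^1 [ e^{c(x+y)} + e^{c|x−y|} + e^{c(2−x−y)} + e^{c(2−|x−y|)} ] dx dy = 2(e^{2c} − 1)/c. -/
/-!
With `g t = e^{ct} + e^{c(2-t)}` the integrand is `g (x + y) + g |x - y|`, and `g` is symmetric
about `1`. For fixed `x ∈ [0, 1]` the substitutions `t = x + y` and `t = |x - y|` turn the inner
integral into `∫₀ˣ g + ∫ₓ^{x+1} g + ∫₀^{1-x} g`, and reflecting the last piece to `∫_{1+x}^2 g`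
shows that it equals `∫₀² g` whatever `x` is. Hence the double integral is
`∫₀² g = 2 ∫₀² e^{ct} dt = 2 (e^{2c} - 1) / c`.
-/

open MeasureTheory Real Set intervalIntegral

variable {g : ℝ → ℝ}

theorem integral_comp_abs_sub_of_mem_Icc (hg : Continuous g) {x : ℝ} (hx : x ∈ Icc (0 : ℝ) 1) :
    ∫ y in (0 : ℝ)..1, g |x - y| = (∫ t in (0 : ℝ)..x, g t) + ∫ t in (0 : ℝ)..1 - x, g t := by
  have hint : ∀ a b : ℝ, IntervalIntegrable (fun y => g |x - y|) volume a b :=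
    (by fun_prop : Continuous fun y => g |x - y|).intervalIntegrable
  rw [← integral_add_adjacent_intervals (hint 0 x) (hint x 1)]
  have left : ∫ y in (0 : ℝ)..x, g |x - y| = ∫ y in (0 : ℝ)..x, g (x - y) :=
    integral_congr fun y hy => by
      rw [uIcc_of_le hx.1] at hy
      rw [abs_of_nonneg (sub_nonneg.2 hy.2)]
  have right : ∫ y in x..1, g |x - y| = ∫ y in x..1, g (y - x) :=
    integral_congr fun y hy => by
      rw [uIcc_of_le hx.2] at hy
      rw [abs_sub_comm, abs_of_nonneg (sub_nonneg.2 hy.1)]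
  rw [left, right, integral_comp_sub_left, integral_comp_sub_right, sub_self, sub_zero]

theorem integral_comp_add_add_comp_abs_sub_of_symm (hg : Continuous g)
    (hsymm : ∀ t, g (2 - t) = g t) {x : ℝ} (hx : x ∈ Icc (0 : ℝ) 1) :
    ∫ y in (0 : ℝ)..1, (g (x + y) + g |x - y|) = ∫ t in (0 : ℝ)..2, g t := by
  have hint : ∀ a b : ℝ, IntervalIntegrable g volume a b := hg.intervalIntegrable
  have reflect : ∫ t in (0 : ℝ)..1 - x, g t = ∫ t in x + 1..2, g t := by
    calc ∫ t in (0 : ℝ)..1 - x, g t = ∫ t in (2 : ℝ) - 2..2 - (x + 1), g t := by ring_nf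
      _ = ∫ t in x + 1..2, g (2 - t) := (integral_comp_sub_left g 2).symm
      _ = ∫ t in x + 1..2, g t := by simp only [hsymm]
  rw [integral_add ((by fun_prop : Continuous fun y => g (x + y)).intervalIntegrable 0 1)
      ((by fun_prop : Continuous fun y => g |x - y|).intervalIntegrable 0 1),
    integral_comp_add_left, integral_comp_abs_sub_of_mem_Icc hg hx, reflect, add_zero,
    add_left_comm, ← add_assoc, integral_add_adjacent_intervals (hint 0 x) (hint x (x + 1)),
    integral_add_adjacent_intervals (hint 0 (x + 1)) (hint (x + 1) 2)]

theorem integral_exp_const_mul {c : ℝ} (hc : c ≠ 0) (a b : ℝ) :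
    ∫ t in a..b, exp (c * t) = (exp (c * b) - exp (c * a)) / c := by
  rw [integral_comp_mul_left (fun t => exp t) hc, integral_exp, smul_eq_mul, inv_mul_eq_div]

/-- Exact evaluation of the double integral of the four real exponentials appearing in
the estimate of the `L²` norm of the frequency-domain Green function. -/
theorem four_exponentials_integral (c : ℝ) (hc : 0 < c) :
    (∫ x in (0:ℝ)..1, ∫ y in (0:ℝ)..1,
        (Real.exp (c * (x + y)) + Real.exp (c * |x - y|)
          + Real.exp (c * (2 - x - y)) + Real.exp (c * (2 - |x - y|))))
      = 2 * (Real.exp (2 * c) - 1) / c := by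
  set g : ℝ → ℝ := fun t => exp (c * t) + exp (c * (2 - t))
  have hg : Continuous g := by fun_prop
  have hsymm : ∀ t, g (2 - t) = g t := fun t => by simp only [g, sub_sub_cancel, add_comm]
  have inner : ∀ x ∈ uIcc (0 : ℝ) 1, ∫ y in (0 : ℝ)..1,
      (exp (c * (x + y)) + exp (c * |x - y|) + exp (c * (2 - x - y)) + exp (c * (2 - |x - y|)))
        = ∫ t in (0 : ℝ)..2, g t := fun x hx => by
    rw [uIcc_of_le zero_le_one] at hx
    rw [← integral_comp_add_add_comp_abs_sub_of_symm hg hsymm hx]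
    refine integral_congr fun y _ => ?_
    simp only [g, sub_sub]
    ring
  have reflect : ∫ t in (0 : ℝ)..2, exp (c * (2 - t)) = ∫ t in (0 : ℝ)..2, exp (c * t) := by
    rw [integral_comp_sub_left (fun t => exp (c * t)), sub_self, sub_zero]
  rw [integral_congr inner, intervalIntegral.integral_const, sub_zero, one_smul,
    intervalIntegral.integral_add (f := fun t => exp (c * t)) (g := fun t => exp (c * (2 - t)))
      ((by fun_prop : Continuous fun t => exp (c * t)).intervalIntegrable 0 2)
      ((by fun_prop : Continuous fun t => exp (c * (2 - t))).intervalIntegrable 0 2),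
    reflect, integral_exp_const_mul hc.ne', mul_zero, exp_zero, mul_comm c 2]
  ring
end

section
/- Let α ∈ (0,1). There exists a constant C > 0, independent of ω, such that for every ω ≠ 0, with √s := |ω|^{α/2} exp(iπα·sgn(ω)/4) ∈ ℂ, the Green function g_ω(x,y) := [e^{√s(x+y)} + e^{√s|x−y|} − e^{√s(2−x−y)} − e^{√s(2−|x−y|)}] / (2√s(1 + e^{2√s})) satisfies ∫_0^1 ∫_0^1 |g_ω(x,y)|² dx dy ≤ C·|ω|^{−α}. -/
open MeasureTheory Real

/-- `√s(ω) = |ω|^{α/2} exp(iπα·sgn(ω)/4)`. -/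
noncomputable def sqrtS (α ω : ℝ) : ℂ :=
  ((|ω| ^ (α / 2) : ℝ) : ℂ) *
    Complex.exp (Complex.I * (Real.pi : ℂ) * (α : ℂ) * ((Real.sign ω : ℝ) : ℂ) / 4)

/-- The frequency-domain Green function `g_ω(x,y)` for `ω ≠ 0`. -/
noncomputable def greenFn (α ω x y : ℝ) : ℂ :=
  (Complex.exp (sqrtS α ω * ((x : ℂ) + (y : ℂ)))
    + Complex.exp (sqrtS α ω * ((|x - y| : ℝ) : ℂ))
    - Complex.exp (sqrtS α ω * (2 - (x : ℂ) - (y : ℂ)))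
    - Complex.exp (sqrtS α ω * (2 - ((|x - y| : ℝ) : ℂ))))
  / (2 * sqrtS α ω * (1 + Complex.exp (2 * sqrtS α ω)))

/-! Write `z = √s`, so that `‖z‖ = |ω|^{α/2}` and, as `|arg z| ≤ π/4`, `‖z‖ ≤ 2 Re z`.
The numerator of `g_ω` is a sum of two differences `e^{zu} - e^{z(2-u)}` with `u ∈ [0,2]`,
each bounded by `2 min(‖z‖,1) e^{2 Re z}` (mean value theorem for small `z`, triangle
inequality for large `z`), while the denominator is at least `2‖z‖(e^{2 Re z} - 1)`. Since
`min(‖z‖,1) ≤ 2 Re z`, the elementary inequality `m e^s ≤ 2(e^s - 1)` for `0 ≤ m ≤ min(1,s)`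
gives `|g_ω| ≤ 4/‖z‖` on the unit square, so the double integral is at most `16 |ω|^{-α}`. -/

open Complex in
noncomputable def greenKernel (z : ℂ) (x y : ℝ) : ℂ :=
  (exp (z * ↑(x + y)) - exp (z * ↑(2 - (x + y)))
    + (exp (z * ↑|x - y|) - exp (z * ↑(2 - |x - y|))))
  / (2 * z * (1 + exp (2 * z)))

lemma greenFn_eq_greenKernel (α ω x y : ℝ) : greenFn α ω x y = greenKernel (sqrtS α ω) x y := by
  rw [greenFn, greenKernel]
  push_cast
  ring_nf

lemma norm_sqrtS (α ω : ℝ) : ‖sqrtS α ω‖ = |ω| ^ (α / 2) := by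
  rw [sqrtS, norm_mul, Complex.norm_exp, Complex.norm_real, Real.norm_eq_abs,
    abs_of_nonneg (by positivity)]
  simp

lemma norm_sqrtS_le_two_mul_re {α : ℝ} (hα : |α| ≤ 1) (ω : ℝ) :
    ‖sqrtS α ω‖ ≤ 2 * (sqrtS α ω).re := by
  have hre : (sqrtS α ω).re = ‖sqrtS α ω‖ * Real.cos (π * α * Real.sign ω / 4) := by
    rw [norm_sqrtS, sqrtS, show Complex.I * π * α * (Real.sign ω : ℝ) / 4 =
      ((π * α * Real.sign ω / 4 : ℝ) : ℂ) * Complex.I by push_cast; ring,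
      Complex.re_ofReal_mul, Complex.exp_ofReal_mul_I_re]
  have hsign : |Real.sign ω| ≤ 1 := by
    rcases Real.sign_apply_eq ω with h | h | h <;> simp [h]
  have hangle : |π * α * Real.sign ω / 4| ≤ π / 3 := by
    rw [abs_div, abs_mul, abs_mul, abs_of_pos Real.pi_pos, abs_of_pos (by norm_num : (0 : ℝ) < 4)]
    have := mul_le_mul hα hsign (abs_nonneg _) zero_le_one
    nlinarith [Real.pi_pos]
  have hcos : 1 / 2 ≤ Real.cos (π * α * Real.sign ω / 4) := by
    rw [← Real.cos_abs, ← Real.cos_pi_div_three]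
    exact Real.cos_le_cos_of_nonneg_of_le_pi (abs_nonneg _) (by linarith [Real.pi_pos]) hangle
  rw [hre]
  nlinarith [norm_nonneg (sqrtS α ω)]

lemma mul_exp_le_two_mul_exp_sub_one {m s : ℝ} (hm0 : 0 ≤ m) (hm1 : m ≤ 1) (hms : m ≤ s) :
    m * Real.exp s ≤ 2 * (Real.exp s - 1) := by
  nlinarith [Real.add_one_le_exp s, mul_le_mul_of_nonneg_right hm1 (hm0.trans hms)]

namespace Complex

variable {z : ℂ}

lemma norm_exp_mul_ofReal_le (hz : 0 ≤ z.re) {t L : ℝ} (ht : t ≤ L) :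
    ‖exp (z * t)‖ ≤ Real.exp (L * z.re) := by
  rw [norm_exp, re_mul_ofReal, mul_comm]
  exact Real.exp_le_exp.2 (mul_le_mul_of_nonneg_right ht hz)

lemma norm_exp_mul_ofReal_sub_le (hz : 0 ≤ z.re) {u v L : ℝ} (hu : u ≤ L) (hv : v ≤ L) :
    ‖exp (z * u) - exp (z * v)‖ ≤ ‖z‖ * Real.exp (L * z.re) * |u - v| := by
  have hderiv (t : ℝ) : HasDerivWithinAt (fun t : ℝ => exp (z * t)) (z * exp (z * t))
      (Set.Iic L) t := by
    simpa [mul_comm] using (((hasDerivAt_id t).ofReal_comp.const_mul z).cexp).hasDerivWithinAt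
  have hbound (t : ℝ) (ht : t ∈ Set.Iic L) : ‖z * exp (z * t)‖ ≤ ‖z‖ * Real.exp (L * z.re) := by
    rw [norm_mul]
    exact mul_le_mul_of_nonneg_left (norm_exp_mul_ofReal_le hz ht) (norm_nonneg z)
  simpa using (convex_Iic L).norm_image_sub_le_of_norm_hasDerivWithin_le
    (fun t _ => hderiv t) hbound hv hu

lemma norm_exp_mul_ofReal_sub_exp_mul_two_sub_le (hz : 0 ≤ z.re) {u : ℝ}
    (hu : u ∈ Set.Icc (0 : ℝ) 2) :
    ‖exp (z * u) - exp (z * ↑(2 - u))‖ ≤ 2 * min ‖z‖ 1 * Real.exp (2 * z.re) := by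
  obtain ⟨hu0, hu2⟩ := hu
  rcases le_total ‖z‖ 1 with hz1 | hz1
  · rw [min_eq_left hz1]
    have hdist : |u - (2 - u)| ≤ 2 := abs_le.2 ⟨by linarith, by linarith⟩
    calc _ ≤ ‖z‖ * Real.exp (2 * z.re) * |u - (2 - u)| :=
          norm_exp_mul_ofReal_sub_le hz hu2 (by linarith)
      _ ≤ ‖z‖ * Real.exp (2 * z.re) * 2 := by gcongr
      _ = _ := by ring
  · rw [min_eq_right hz1]
    calc _ ≤ ‖exp (z * u)‖ + ‖exp (z * ↑(2 - u))‖ := norm_sub_le _ _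
      _ ≤ Real.exp (2 * z.re) + Real.exp (2 * z.re) :=
          add_le_add (norm_exp_mul_ofReal_le hz hu2) (norm_exp_mul_ofReal_le hz (by linarith))
      _ = _ := by ring

lemma exp_re_sub_one_le_norm_one_add_exp (z : ℂ) : Real.exp z.re - 1 ≤ ‖1 + exp z‖ := by
  simpa [norm_exp, add_comm] using norm_sub_norm_le (exp z) (-1)

end Complex

open Complex in
lemma norm_greenKernel_le {z : ℂ} (hz : ‖z‖ ≤ 2 * z.re) (hz0 : z ≠ 0) {x y : ℝ}
    (hx : x ∈ Set.Icc (0 : ℝ) 1) (hy : y ∈ Set.Icc (0 : ℝ) 1) :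
    ‖greenKernel z x y‖ ≤ 4 / ‖z‖ := by
  have hre : 0 ≤ z.re := by linarith [norm_nonneg z]
  have hxy : x + y ∈ Set.Icc (0 : ℝ) 2 := ⟨by linarith [hx.1, hy.1], by linarith [hx.2, hy.2]⟩
  have habs : |x - y| ∈ Set.Icc (0 : ℝ) 2 :=
    ⟨abs_nonneg _, by linarith [abs_sub_le_of_nonneg_of_le hx.1 hx.2 hy.1 hy.2]⟩
  have hden : 2 * ‖z‖ * (Real.exp (2 * z.re) - 1) ≤ ‖2 * z * (1 + exp (2 * z))‖ := by
    rw [norm_mul, norm_mul, Complex.norm_two]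
    gcongr
    simpa using exp_re_sub_one_le_norm_one_add_exp (2 * z)
  have hcancel : min ‖z‖ 1 * Real.exp (2 * z.re) ≤ 2 * (Real.exp (2 * z.re) - 1) :=
    mul_exp_le_two_mul_exp_sub_one (by positivity) (min_le_right _ _)
      ((min_le_left _ _).trans hz)
  rw [greenKernel, norm_div]
  refine div_le_of_le_mul₀ (norm_nonneg _) (by positivity) ?_
  calc _ ≤ ‖exp (z * ↑(x + y)) - exp (z * ↑(2 - (x + y)))‖
        + ‖exp (z * ↑|x - y|) - exp (z * ↑(2 - |x - y|))‖ := norm_add_le _ _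
    _ ≤ 2 * min ‖z‖ 1 * Real.exp (2 * z.re) + 2 * min ‖z‖ 1 * Real.exp (2 * z.re) :=
        add_le_add (norm_exp_mul_ofReal_sub_exp_mul_two_sub_le hre hxy)
          (norm_exp_mul_ofReal_sub_exp_mul_two_sub_le hre habs)
    _ ≤ 4 / ‖z‖ * (2 * ‖z‖ * (Real.exp (2 * z.re) - 1)) := by
        rw [div_mul_eq_mul_div, le_div_iff₀ (norm_pos_iff.2 hz0)]
        nlinarith [norm_pos_iff.2 hz0]
    _ ≤ _ := by gcongr

lemma norm_intervalIntegral_intervalIntegral_le {E : Type*} [NormedAddCommGroup E]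
    [NormedSpace ℝ E] {f : ℝ → ℝ → E} {a b c d M : ℝ}
    (h : ∀ x ∈ Set.uIoc a b, ∀ y ∈ Set.uIoc c d, ‖f x y‖ ≤ M) :
    ‖∫ x in a..b, ∫ y in c..d, f x y‖ ≤ M * |d - c| * |b - a| :=
  intervalIntegral.norm_integral_le_of_norm_le_const fun x hx =>
    intervalIntegral.norm_integral_le_of_norm_le_const (h x hx)

/-- There is a constant `C > 0`, independent of `ω`, such that for every `ω ≠ 0` the
Green function satisfies `∫_0^1 ∫_0^1 |g_ω(x,y)|² dx dy ≤ C |ω|^{−α}`. -/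
theorem greenFn_L2_decay (α : ℝ) (hα : α ∈ Set.Ioo (0:ℝ) 1) :
    ∃ C > 0, ∀ ω : ℝ, ω ≠ 0 →
      (∫ x in (0:ℝ)..1, ∫ y in (0:ℝ)..1, ‖greenFn α ω x y‖ ^ 2) ≤ C * |ω| ^ (-α) := by
  have hα' : |α| ≤ 1 := abs_le.2 ⟨by linarith [hα.1], hα.2.le⟩
  refine ⟨16, by norm_num, fun ω hω => ?_⟩
  set z := sqrtS α ω
  have hz0 : z ≠ 0 := by
    rw [← norm_pos_iff, norm_sqrtS]
    exact Real.rpow_pos_of_pos (abs_pos.2 hω) _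
  have hpointwise : ∀ x ∈ Set.uIoc (0 : ℝ) 1, ∀ y ∈ Set.uIoc (0 : ℝ) 1,
      ‖‖greenFn α ω x y‖ ^ 2‖ ≤ (4 / ‖z‖) ^ 2 := by
    intro x hx y hy
    rw [Set.uIoc_of_le zero_le_one] at hx hy
    rw [norm_pow, norm_norm, greenFn_eq_greenKernel]
    gcongr
    exact norm_greenKernel_le (norm_sqrtS_le_two_mul_re hα' ω) hz0
      (Set.Ioc_subset_Icc_self hx) (Set.Ioc_subset_Icc_self hy)
  calc _ ≤ ‖∫ x in (0:ℝ)..1, ∫ y in (0:ℝ)..1, ‖greenFn α ω x y‖ ^ 2‖ := le_abs_self _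
    _ ≤ (4 / ‖z‖) ^ 2 * |1 - 0| * |1 - 0| := norm_intervalIntegral_intervalIntegral_le hpointwise
    _ = 16 * |ω| ^ (-α) := by
      rw [norm_sqrtS, div_pow, ← Real.rpow_mul_natCast (abs_nonneg ω),
        Real.rpow_neg (abs_nonneg ω)]
      norm_num
      ring
end

section
/- Let a > 0 and b ≠ 0 be real numbers and set z := a + ib ∈ ℂ. Then ∫_0^1 | e^{z y} − e^{z(2−y)} |² dy = (e^{4a} − 1)/(2a) − e^{2a} · sin(2b)/b. -/
/-!
Expanding `|u - v|² = |u|² + |v|² - 2 Re (u v̄)` with `u = e^{zy}`, `v = e^{z(2-y)}` gives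
`e^{2ay} + e^{2a(2-y)} - 2 e^{2a} cos (2b(y - 1))`, since `u v̄ = e^{2a + 2ib(y-1)}`. The two
exponentials are mirror images of each other about `y = 1`, so together they integrate
`e^{2ay}` over `[0, 2]`.
-/

open MeasureTheory Real

theorem Complex.norm_exp_sub_exp_sq (w₁ w₂ : ℂ) :
    ‖Complex.exp w₁ - Complex.exp w₂‖ ^ 2 =
      Real.exp (2 * w₁.re) + Real.exp (2 * w₂.re)
        - 2 * Real.exp (w₁.re + w₂.re) * Real.cos (w₁.im - w₂.im) := by
  have hcross : Complex.exp w₁ * starRingEnd ℂ (Complex.exp w₂)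
      = Complex.exp (w₁ + starRingEnd ℂ w₂) := by
    rw [← Complex.exp_conj, Complex.exp_add]
  rw [Complex.sq_norm, Complex.normSq_sub, hcross, Complex.exp_re, Complex.normSq_eq_norm_sq,
    Complex.normSq_eq_norm_sq, Complex.norm_exp, Complex.norm_exp, ← Real.exp_nat_mul,
    ← Real.exp_nat_mul]
  simp only [Complex.add_re, Complex.add_im, Complex.conj_re, Complex.conj_im, Nat.cast_ofNat]
  ring_nf

namespace intervalIntegral

theorem integral_add_comp_reflect {f : ℝ → ℝ} (hf : Continuous f) (a b : ℝ) :
    ∫ x in a..b, (f x + f (2 * b - x)) = ∫ x in a..2 * b - a, f x := by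
  have hreflect : Continuous fun x => f (2 * b - x) := by fun_prop
  rw [integral_add (hf.intervalIntegrable _ _) (hreflect.intervalIntegrable _ _),
    integral_comp_sub_left, show 2 * b - b = b by ring,
    integral_add_adjacent_intervals (hf.intervalIntegrable _ _) (hf.intervalIntegrable _ _)]

end intervalIntegral

-- `2 * 1 - y` is the reflection `2 * b - y` of `integral_add_comp_reflect` at `b = 1`.
theorem norm_exp_mul_sub_exp_mul_two_sub_sq (a b y : ℝ) :
    ‖Complex.exp (((a : ℂ) + (b : ℂ) * Complex.I) * (y : ℂ))
        - Complex.exp (((a : ℂ) + (b : ℂ) * Complex.I) * (2 - (y : ℂ)))‖ ^ 2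
      = (Real.exp (2 * a * y) + Real.exp (2 * a * (2 * 1 - y)))
        - 2 * Real.exp (2 * a) * Real.cos (2 * b * y - 2 * b) := by
  rw [Complex.norm_exp_sub_exp_sq]
  simp only [Complex.mul_re, Complex.mul_im, Complex.add_re, Complex.add_im, Complex.sub_re,
    Complex.sub_im, Complex.ofReal_re, Complex.ofReal_im, Complex.I_re, Complex.I_im,
    Complex.re_ofNat, Complex.im_ofNat]
  ring_nf

/-- For `a > 0`, `b ≠ 0` and `z = a + ib`, the exact evaluation
`∫_0^1 |e^{zy} − e^{z(2−y)}|² dy = (e^{4a} − 1)/(2a) − e^{2a} sin(2b)/b`. -/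
theorem numerator_L2_norm (a b : ℝ) (ha : 0 < a) (hb : b ≠ 0) :
    (∫ y in (0:ℝ)..1,
        ‖Complex.exp (((a : ℂ) + (b : ℂ) * Complex.I) * (y : ℂ))
          - Complex.exp (((a : ℂ) + (b : ℂ) * Complex.I) * (2 - (y : ℂ)))‖ ^ 2)
      = (Real.exp (4 * a) - 1) / (2 * a) - Real.exp (2 * a) * Real.sin (2 * b) / b := by
  have hexp : Continuous fun y : ℝ => Real.exp (2 * a * y) := by fun_prop
  simp_rw [norm_exp_mul_sub_exp_mul_two_sub_sq]
  rw [intervalIntegral.integral_sub (Continuous.intervalIntegrable (by fun_prop) _ _)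
      (Continuous.intervalIntegrable (by fun_prop) _ _),
    intervalIntegral.integral_add_comp_reflect hexp, intervalIntegral.integral_const_mul,
    intervalIntegral.integral_comp_mul_left (fun y => Real.exp y) (by positivity),
    intervalIntegral.integral_comp_mul_sub (fun y => Real.cos y) (by positivity),
    integral_exp, integral_cos]
  simp only [smul_eq_mul, mul_zero, mul_one, sub_zero, sub_self, zero_sub, Real.exp_zero,
    Real.sin_zero, Real.sin_neg]
  rw [show 2 * a * 2 = 4 * a by ring]
  field_simp
end

section
/- For every real k > 0, the function l₂(k) := (2k − 1) e^{2k} − 2k² e^{k} + 1 satisfies l₂(k) > 0. -/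
/-!
Since `l₂(0) = 0`, it suffices that `l₂` is strictly increasing on `[0, ∞)`. Its derivative factors
as `l₂'(k) = 2k eᵏ (2eᵏ − 2 − k)`, and `2eᵏ > 2 + 2k > 2 + k` for `k > 0`.
-/

open Real Set

noncomputable def l₂ (k : ℝ) : ℝ := (2 * k - 1) * exp (2 * k) - 2 * k ^ 2 * exp k + 1

lemma l₂_zero : l₂ 0 = 0 := by
  simp [l₂]

lemma hasDerivAt_l₂ (x : ℝ) : HasDerivAt l₂ (2 * x * exp x * (2 * exp x - 2 - x)) x := by
  have h_exp_two_mul : HasDerivAt (fun k => exp (2 * k)) (exp (2 * x) * 2) x :=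
    ((hasDerivAt_id x).const_mul 2).exp.congr_deriv (by simp)
  refine (((((hasDerivAt_id x).const_mul 2).sub_const 1).fun_mul h_exp_two_mul).fun_sub
    (((hasDerivAt_pow 2 x).const_mul 2).fun_mul (hasDerivAt_exp x)) |>.add_const 1).congr_deriv ?_
  rw [show 2 * x = x + x by ring, exp_add]
  simp only [mul_one, id_eq, Nat.cast_ofNat, Nat.add_one_sub_one, pow_one]
  ring

lemma two_add_lt_two_mul_exp {x : ℝ} (hx : 0 < x) : 2 + x < 2 * exp x := by
  linarith [add_one_lt_exp hx.ne']

lemma strictMonoOn_l₂ : StrictMonoOn l₂ (Ici 0) := by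
  refine strictMonoOn_of_hasDerivWithinAt_pos (convex_Ici 0)
    (fun x _ => (hasDerivAt_l₂ x).continuousAt.continuousWithinAt)
    (fun x _ => (hasDerivAt_l₂ x).hasDerivWithinAt) fun x hx => ?_
  rw [interior_Ici, mem_Ioi] at hx
  have := two_add_lt_two_mul_exp hx
  exact mul_pos (by positivity) (by linarith)

/-- For every `k > 0`, `l₂(k) = (2k − 1)e^{2k} − 2k²e^{k} + 1 > 0`. -/
theorem l2_pos (k : ℝ) (hk : 0 < k) :
    0 < (2 * k - 1) * Real.exp (2 * k) - 2 * k ^ 2 * Real.exp k + 1 := by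
  show 0 < l₂ k
  simpa [l₂_zero] using strictMonoOn_l₂ self_mem_Ici hk.le hk
end

section
/- The function l₁ : (0,∞) → ℝ defined by l₁(k) = (e^{2k} − 1)/k − 2e^{k} is strictly increasing on (0,∞). -/
/-!
Writing `e^{2k} − 1 = 2 e^k sinh k` gives `l₁(k) = 2 e^k (sinh k / k − 1)`. On `[0, ∞)` the
derivative `cosh` of `sinh` is strictly increasing, so `sinh` is strictly convex there and its
secant slope from the origin, `sinh k / k`, is strictly increasing on `(0, ∞)`; it exceeds `1`
because `k < sinh k`. Hence `l₁` is twice a product of two positive strictly increasing functions.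
-/

open Real Set

namespace Real

theorem exp_two_mul_sub_one (x : ℝ) : exp (2 * x) - 1 = 2 * exp x * sinh x := by
  rw [sinh_eq, exp_neg, two_mul, exp_add]
  field_simp

theorem strictConvexOn_sinh : StrictConvexOn ℝ (Ici 0) sinh := by
  refine StrictMonoOn.strictConvexOn_of_deriv (convex_Ici 0) continuous_sinh.continuousOn ?_
  rw [deriv_sinh, interior_Ici]
  exact cosh_strictMonoOn.mono Ioi_subset_Ici_self

theorem strictMonoOn_sinh_div_self : StrictMonoOn (fun x => sinh x / x) (Ioi 0) := by
  intro x hx y hy hxy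
  simpa using strictConvexOn_sinh.secant_strict_mono self_mem_Ici (mem_Ici.2 hx.le)
    (mem_Ici.2 hy.le) hx.ne' hy.ne' hxy

theorem one_lt_sinh_div_self {x : ℝ} (hx : 0 < x) : 1 < sinh x / x :=
  (one_lt_div hx).2 (self_lt_sinh_iff.2 hx)

end Real

/-- The function `l₁(k) = (e^{2k} − 1)/k − 2e^{k}` is strictly increasing on `(0,∞)`. -/
theorem l1_strictMonoOn :
    StrictMonoOn (fun k : ℝ => (Real.exp (2 * k) - 1) / k - 2 * Real.exp k)
      (Set.Ioi 0) := by
  intro a ha b hb hab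
  have factored (k : ℝ) : (exp (2 * k) - 1) / k - 2 * exp k = 2 * (exp k * (sinh k / k - 1)) := by
    rw [exp_two_mul_sub_one, mul_assoc, mul_div_assoc]
    ring
  simp only [factored]
  gcongr 2 * ?_
  exact mul_lt_mul'' (exp_lt_exp.2 hab) (sub_lt_sub_right (strictMonoOn_sinh_div_self ha hb hab) 1)
    (exp_pos a).le (sub_pos.2 (one_lt_sinh_div_self ha)).le
end

section
/- Let α ∈ (0,1). There exists a constant C > 0, independent of ω, such that for every ω ≠ 0, with √s := |ω|^{α/2} exp(iπα·sgn(ω)/4) and g_ω(0,y) = (e^{√s y} − e^{√s(2−y)}) / (√s (1 + e^{2√s})), one has ∫_0^1 |g_ω(0,y)|² dy ≤ C |ω|^{−α}. -/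
open MeasureTheory Real

/-- The frequency-domain Green function evaluated at `x = 0` for `ω ≠ 0`:
`g_ω(0,y) = (e^{√s y} − e^{√s(2−y)}) / (√s(1 + e^{2√s}))`. -/
noncomputable def greenAtZero (α ω y : ℝ) : ℂ :=
  (Complex.exp (sqrtS α ω * (y : ℂ)) - Complex.exp (sqrtS α ω * (2 - (y : ℂ))))
    / (sqrtS α ω * (1 + Complex.exp (2 * sqrtS α ω)))

/-!
Write `s = √s(ω)`. Since `|α| ≤ 1`, `s` lies in the sector `|Im s| ≤ Re s`, where `1 + e^{2s}` is
comparable to `e^{2 Re s}`: either `Re e^{2s} ≥ 0`, or `|Im 2s| > π/2` forces `e^{2 Re s} ≥ 2`.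
On `0 ≤ y ≤ 2` both exponentials in the numerator of `g_ω(0,y)` are at most `e^{2 Re s}`, so
`|g_ω(0,y)| ≤ 4 / |s| = 4 |ω|^{-α/2}`, and squaring and integrating over `[0,1]` gives the claim.
-/

lemma Real.abs_sin_le_cos_of_abs_le_pi_div_four {x : ℝ} (hx : |x| ≤ π / 4) : |sin x| ≤ cos x := by
  have hπ := pi_pos
  rw [abs_sin_eq_sin_abs_of_abs_le_pi (by linarith), ← cos_abs]
  calc sin |x| ≤ sin (π / 4) :=
        sin_le_sin_of_le_of_le_pi_div_two (by linarith [abs_nonneg x]) (by linarith) hx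
    _ = cos (π / 4) := by rw [sin_pi_div_four, cos_pi_div_four]
    _ ≤ cos |x| := cos_le_cos_of_nonneg_of_le_pi (abs_nonneg x) (by linarith) hx

namespace Complex

lemma norm_le_two_mul_norm_one_add {w : ℂ} (hw : 0 ≤ w.re ∨ 2 ≤ ‖w‖) : ‖w‖ ≤ 2 * ‖1 + w‖ := by
  rcases hw with hre | hnorm
  · have hsq : ‖w‖ ^ 2 ≤ ‖1 + w‖ ^ 2 := by
      simp only [Complex.sq_norm, normSq_apply, add_re, add_im, one_re, one_im]
      nlinarith
    linarith [le_of_sq_le_sq hsq (norm_nonneg _), norm_nonneg w]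
  · have := norm_sub_norm_le w (-1)
    rw [norm_neg, norm_one, sub_neg_eq_add, add_comm] at this
    linarith

lemma exp_re_le_two_mul_norm_one_add_exp {z : ℂ} (hz : |z.im| ≤ z.re) :
    Real.exp z.re ≤ 2 * ‖1 + exp z‖ := by
  rw [← norm_exp]
  apply norm_le_two_mul_norm_one_add
  by_cases him : |z.im| ≤ π / 2
  · left
    rw [exp_re]
    exact mul_nonneg (Real.exp_pos _).le (cos_nonneg_of_mem_Icc (abs_le.mp him))
  · right
    rw [norm_exp]
    linarith [Real.add_one_le_exp z.re, pi_gt_three]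

lemma norm_exp_mul_ofReal_le_s14 {s : ℂ} (hs : 0 ≤ s.re) {u a : ℝ} (hu : u ≤ a) :
    ‖exp (s * u)‖ ≤ Real.exp (a * s.re) := by
  rw [norm_exp, re_mul_ofReal, mul_comm a]
  exact Real.exp_le_exp.mpr (mul_le_mul_of_nonneg_left hu hs)

end Complex

lemma Real.abs_sign_le_one (r : ℝ) : |Real.sign r| ≤ 1 := by
  rcases Real.sign_apply_eq r with h | h | h <;> simp [h]

open Complex in
lemma sqrtS_eq (α ω : ℝ) :
    sqrtS α ω = ((|ω| ^ (α / 2) : ℝ) : ℂ) * exp (((π / 4 * (α * Real.sign ω) : ℝ) : ℂ) * I) := by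
  rw [sqrtS]
  push_cast
  ring_nf

lemma norm_sqrtS_sq (α ω : ℝ) : ‖sqrtS α ω‖ ^ 2 = |ω| ^ α := by
  rw [sqrtS_eq, norm_mul, Complex.norm_exp_ofReal_mul_I, mul_one, Complex.norm_real,
    Real.norm_of_nonneg (by positivity), ← Real.rpow_natCast, ← Real.rpow_mul (abs_nonneg ω)]
  norm_num

lemma abs_im_sqrtS_le_re {α : ℝ} (hα : |α| ≤ 1) (ω : ℝ) :
    |(sqrtS α ω).im| ≤ (sqrtS α ω).re := by
  have hθ : |π / 4 * (α * Real.sign ω)| ≤ π / 4 := by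
    rw [abs_mul, abs_of_pos (by positivity)]
    refine mul_le_of_le_one_right (by positivity) ?_
    rw [abs_mul]
    exact mul_le_one₀ hα (abs_nonneg _) (Real.abs_sign_le_one ω)
  rw [sqrtS_eq, Complex.re_ofReal_mul, Complex.im_ofReal_mul, Complex.exp_ofReal_mul_I_re,
    Complex.exp_ofReal_mul_I_im, abs_mul, abs_of_nonneg (by positivity)]
  exact mul_le_mul_of_nonneg_left (Real.abs_sin_le_cos_of_abs_le_pi_div_four hθ) (by positivity)

lemma norm_greenAtZero_le {α : ℝ} (hα : |α| ≤ 1) (ω : ℝ) {y : ℝ} (hy : y ∈ Set.Icc (0 : ℝ) 2) :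
    ‖greenAtZero α ω y‖ ≤ 4 / ‖sqrtS α ω‖ := by
  set s := sqrtS α ω
  have hsector : |s.im| ≤ s.re := abs_im_sqrtS_le_re hα ω
  have hre : 0 ≤ s.re := (abs_nonneg _).trans hsector
  have hdenom : Real.exp (2 * s.re) ≤ 2 * ‖1 + Complex.exp (2 * s)‖ := by
    simpa using Complex.exp_re_le_two_mul_norm_one_add_exp (z := 2 * s) (by simpa [abs_mul])
  have hnum : ‖Complex.exp (s * y) - Complex.exp (s * (2 - y))‖ ≤ 2 * Real.exp (2 * s.re) := by
    have h₁ := Complex.norm_exp_mul_ofReal_le_s14 hre (show y ≤ 2 by linarith [hy.2])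
    have h₂ := Complex.norm_exp_mul_ofReal_le_s14 hre (show 2 - y ≤ 2 by linarith [hy.1])
    push_cast at h₂
    linarith [norm_sub_le (Complex.exp (s * y)) (Complex.exp (s * (2 - y)))]
  have hD : 0 < ‖1 + Complex.exp (2 * s)‖ := by linarith [Real.exp_pos (2 * s.re)]
  rw [greenAtZero, norm_div, norm_mul, div_mul_eq_div_div_swap]
  refine div_le_div_of_nonneg_right ?_ (norm_nonneg s)
  rw [div_le_iff₀ hD]
  linarith

/-- There is a constant `C > 0`, independent of `ω`, such that for every `ω ≠ 0`,
`∫_0^1 |g_ω(0,y)|² dy ≤ C |ω|^{−α}`. -/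
theorem greenAtZero_L2_decay (α : ℝ) (hα : α ∈ Set.Ioo (0:ℝ) 1) :
    ∃ C > 0, ∀ ω : ℝ, ω ≠ 0 →
      (∫ y in (0:ℝ)..1, ‖greenAtZero α ω y‖ ^ 2) ≤ C * |ω| ^ (-α) := by
  have hα' : |α| ≤ 1 := abs_le.mpr ⟨by linarith [hα.1], hα.2.le⟩
  refine ⟨16, by norm_num, fun ω _ => ?_⟩
  have hbound : ∀ y ∈ Set.uIoc (0 : ℝ) 1, ‖‖greenAtZero α ω y‖ ^ 2‖ ≤ (4 / ‖sqrtS α ω‖) ^ 2 := by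
    intro y hy
    rw [Set.uIoc_of_le zero_le_one] at hy
    rw [norm_pow, norm_norm]
    gcongr
    exact norm_greenAtZero_le hα' ω ⟨hy.1.le, by linarith [hy.2]⟩
  calc (∫ y in (0:ℝ)..1, ‖greenAtZero α ω y‖ ^ 2)
      ≤ (4 / ‖sqrtS α ω‖) ^ 2 * |1 - 0| :=
        (le_abs_self _).trans (intervalIntegral.norm_integral_le_of_norm_le_const hbound)
    _ = 16 * |ω| ^ (-α) := by
        rw [div_pow, norm_sqrtS_sq, Real.rpow_neg (abs_nonneg ω)]
        norm_num [div_eq_mul_inv]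
end
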